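/- arXiv:1805.10660 — 2 statements merged into one kernel-verified Lean document; each statement's English description precedes it below -/
import Mathlib

section
/- Fix 1 ≤ s ≤ d and define Ψ : ℝ^d → ℝ^d by Ψ(x_1,…,x_d) := (x_1 + … + x_s − 1, x_2, …, x_d). Let F ⊂ ℝ_{≥0}^d be a finite set with x_1 + … + x_s ≥ 1 for all x ∈ F, and let Δ := conv(F) + ℝ_{≥0}^d. Then the smallest convex subset Δ' of ℝ^d containing Ψ(Δ) and satisfying Δ' + ℝ_{≥0}^d = Δ' equals conv(Ψ(F)) + ℝ_{≥0}^d, and every vertex (extreme point) of Δ' is the image under Ψ of a vertex of Δ. -/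
/-!
Write `Ψ = a + L` with `L` linear and `a` constant. Since `L` maps the orthant `O` into itself,
`Ψ(conv F + O) ⊆ conv Ψ(F) + O`, and `conv Ψ(F) + O` is clearly the smallest convex,
`O`-stable set containing `Ψ(F)`. An extreme point `v` of `A + O` lies in `A` (otherwise,
writing `v = u + y` with `y ∈ O \ {0}`, it is the midpoint of `u` and `u + 2y`), so `v = Ψ w`
with `w ∈ conv F`. As `Ψ` is injective (for `s ≥ 1`), a segment of `conv F + O` through `w`
is mapped to a segment of `conv Ψ(F) + O` through `v`, so `w` is extreme as well.
-/

open Pointwise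

/-- The nonnegative orthant in `ℝ^d`. -/
def orthant (d : ℕ) : Set (Fin d → ℝ) := {x | ∀ i, 0 ≤ x i}

open Set

section AffineMap

variable {𝕜 E F : Type*} [Ring 𝕜] [AddCommGroup E] [Module 𝕜 E] [AddCommGroup F] [Module 𝕜 F]

theorem AffineMap.map_add_eq_add_linear (f : E →ᵃ[𝕜] F) (a k : E) :
    f (a + k) = f a + f.linear k := by
  rw [add_comm a, ← vadd_eq_add, f.map_vadd, vadd_eq_add, add_comm]

theorem AffineMap.image_add (f : E →ᵃ[𝕜] F) (A K : Set E) :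
    f '' (A + K) = f '' A + f.linear '' K := by
  simp only [← image2_add, image_image2, image2_image_left, image2_image_right,
    f.map_add_eq_add_linear]

variable [PartialOrder 𝕜] [IsOrderedRing 𝕜]

theorem mem_extremePoints_of_injective_of_image_mem {f : E →ᵃ[𝕜] F}
    (hf : Function.Injective f) {X : Set E} {Y : Set F} (hXY : f '' X ⊆ Y) {w : E}
    (hw : w ∈ X) (hfw : f w ∈ Y.extremePoints 𝕜) : w ∈ X.extremePoints 𝕜 := by
  refine ⟨hw, fun a ha b hb hab => hf ?_⟩
  refine hfw.2 (hXY (mem_image_of_mem f ha)) (hXY (mem_image_of_mem f hb)) ?_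
  rw [← image_openSegment]
  exact mem_image_of_mem f hab

end AffineMap

theorem mem_of_mem_extremePoints_add {E : Type*} [AddCommGroup E] [Module ℝ E] {A K : Set E}
    (hK : ∀ y ∈ K, ∀ t : ℝ, 0 ≤ t → t • y ∈ K) {v : E} (hv : v ∈ (A + K).extremePoints ℝ) :
    v ∈ A := by
  obtain ⟨⟨u, hu, y, hy, rfl⟩, hext⟩ := hv
  have huK : u ∈ A + K := ⟨u, hu, 0, by simpa using hK y hy 0 le_rfl, add_zero u⟩
  have hu2 : u + (2 : ℝ) • y ∈ A + K := add_mem_add hu (hK y hy 2 zero_le_two)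
  have hmid : u + y ∈ openSegment ℝ u (u + (2 : ℝ) • y) :=
    ⟨1 / 2, 1 / 2, by norm_num, by norm_num, by norm_num, by module⟩
  rw [← hext huK hu2 hmid]
  exact hu

section Orthant

variable {d : ℕ}

theorem zero_mem_orthant : (0 : Fin d → ℝ) ∈ orthant d := fun _ => le_rfl

theorem smul_mem_orthant {y : Fin d → ℝ} (hy : y ∈ orthant d) {t : ℝ} (ht : 0 ≤ t) :
    t • y ∈ orthant d :=
  fun i => mul_nonneg ht (hy i)

theorem convex_orthant : Convex ℝ (orthant d) := convex_Ici 0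

theorem orthant_add_orthant : orthant d + orthant d = orthant d := by
  refine Subset.antisymm ?_ (subset_add_left _ zero_mem_orthant)
  rintro _ ⟨x, hx, y, hy, rfl⟩ i
  exact add_nonneg (hx i) (hy i)

end Orthant

section Blowup

variable (d s : ℕ)

noncomputable def blowupLinear : (Fin d → ℝ) →ₗ[ℝ] (Fin d → ℝ) where
  toFun x i := if (i : ℕ) = 0 then ∑ j ∈ Finset.univ.filter (fun j : Fin d => (j : ℕ) < s), x j
    else x i
  map_add' x y := by
    funext i
    by_cases h : (i : ℕ) = 0 <;> simp [h, Finset.sum_add_distrib]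
  map_smul' c x := by
    funext i
    by_cases h : (i : ℕ) = 0 <;> simp [h, Finset.mul_sum]

noncomputable def blowupMap : (Fin d → ℝ) →ᵃ[ℝ] (Fin d → ℝ) where
  toFun x i := if (i : ℕ) = 0
    then (∑ j ∈ Finset.univ.filter (fun j : Fin d => (j : ℕ) < s), x j) - 1 else x i
  linear := blowupLinear d s
  map_vadd' p v := by
    funext i
    by_cases h : (i : ℕ) = 0 <;> simp [blowupLinear, h, Finset.sum_add_distrib]; ring

theorem blowupLinear_mapsTo_orthant : MapsTo (blowupLinear d s) (orthant d) (orthant d) := by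
  intro y hy i
  by_cases h : (i : ℕ) = 0
  · simpa [blowupLinear, h] using Finset.sum_nonneg fun j _ => hy j
  · simpa [blowupLinear, h] using hy i

variable {d s}

theorem blowupLinear_injective (hs : 0 < s) : Function.Injective (blowupLinear d s) := by
  refine (injective_iff_map_eq_zero _).2 fun x hx => ?_
  have hcoord (i : Fin d) := congrFun hx i
  have hx_ne : ∀ j : Fin d, (j : ℕ) ≠ 0 → x j = 0 := fun j hj => by
    simpa [blowupLinear, hj] using hcoord j
  funext i
  by_cases hi : (i : ℕ) = 0
  · have hsum := hcoord i
    simp only [blowupLinear, LinearMap.coe_mk, AddHom.coe_mk, hi, if_true, Pi.zero_apply] at hsum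
    rwa [Finset.sum_eq_single_of_mem i (by simp [hi, hs])
      fun j _ hji => hx_ne j fun hj => hji (Fin.ext (hj.trans hi.symm))] at hsum
  · exact hx_ne i hi

theorem blowupMap_injective (hs : 0 < s) : Function.Injective (blowupMap d s) :=
  (AffineMap.linear_injective_iff _).1 (blowupLinear_injective hs)

end Blowup

theorem stmt_2_general (d s : ℕ) (hs1 : 1 ≤ s)
    (F : Finset (Fin d → ℝ))
    (Ψ : (Fin d → ℝ) → (Fin d → ℝ))
    (hΨ : ∀ x, Ψ x = fun i : Fin d => if (i : ℕ) = 0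
        then (∑ j ∈ Finset.univ.filter (fun j : Fin d => (j : ℕ) < s), x j) - 1
        else x i) :
    (Convex ℝ (convexHull ℝ (Ψ '' (F : Set (Fin d → ℝ))) + orthant d) ∧
     Ψ '' (convexHull ℝ (F : Set (Fin d → ℝ)) + orthant d) ⊆
       convexHull ℝ (Ψ '' (F : Set (Fin d → ℝ))) + orthant d ∧
     (convexHull ℝ (Ψ '' (F : Set (Fin d → ℝ))) + orthant d) + orthant d =
       convexHull ℝ (Ψ '' (F : Set (Fin d → ℝ))) + orthant d ∧
     (∀ S : Set (Fin d → ℝ), Convex ℝ S →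
        Ψ '' (convexHull ℝ (F : Set (Fin d → ℝ)) + orthant d) ⊆ S →
        S + orthant d = S →
        convexHull ℝ (Ψ '' (F : Set (Fin d → ℝ))) + orthant d ⊆ S)) ∧
    (∀ v ∈ Set.extremePoints ℝ (convexHull ℝ (Ψ '' (F : Set (Fin d → ℝ))) + orthant d),
      ∃ w ∈ Set.extremePoints ℝ (convexHull ℝ (F : Set (Fin d → ℝ)) + orthant d),
        Ψ w = v) := by
  obtain rfl : Ψ = blowupMap d s := funext fun x => hΨ x
  have hhull := (blowupMap d s).image_convexHull (F : Set (Fin d → ℝ))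
  have hF : (F : Set (Fin d → ℝ)) ⊆ convexHull ℝ F + orthant d :=
    (subset_convexHull ℝ _).trans (subset_add_left _ zero_mem_orthant)
  have himage : blowupMap d s '' (convexHull ℝ F + orthant d) ⊆
      convexHull ℝ (blowupMap d s '' F) + orthant d := by
    rw [AffineMap.image_add, ← hhull]
    exact add_subset_add_left (blowupLinear_mapsTo_orthant d s).image_subset
  refine ⟨⟨(convex_convexHull ℝ _).add convex_orthant, himage,
    by rw [add_assoc, orthant_add_orthant], fun S hS hΨS hSO => ?_⟩, fun v hv => ?_⟩
  · rw [← hSO]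
    exact add_subset_add_right (convexHull_min ((image_mono hF).trans hΨS) hS)
  · obtain ⟨w, hw, rfl⟩ : v ∈ blowupMap d s '' convexHull ℝ F :=
      hhull ▸ mem_of_mem_extremePoints_add (fun _ hy _ ht => smul_mem_orthant hy ht) hv
    exact ⟨w, mem_extremePoints_of_injective_of_image_mem (blowupMap_injective hs1) himage
      (subset_add_left _ zero_mem_orthant hw) hv, rfl⟩

/-- Transformation of a Newton polyhedron under the monomial blowing-up map
`Ψ(x) = (x_1 + … + x_s - 1, x_2, …, x_d)`: the smallest convex set containing `Ψ(Δ)` and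
stable under adding the nonnegative orthant is `conv(Ψ(F)) + ℝ_{≥0}^d`, and every vertex of
the latter is the image of a vertex of `Δ`. -/
theorem stmt_2 (d s : ℕ) (hs1 : 1 ≤ s) (hsd : s ≤ d)
    (F : Finset (Fin d → ℝ)) (hFpos : ∀ x ∈ F, ∀ i, 0 ≤ x i)
    (hF1 : ∀ x ∈ F, 1 ≤ ∑ i ∈ Finset.univ.filter (fun i : Fin d => (i : ℕ) < s), x i)
    (Ψ : (Fin d → ℝ) → (Fin d → ℝ))
    (hΨ : ∀ x, Ψ x = fun i : Fin d => if (i : ℕ) = 0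
        then (∑ j ∈ Finset.univ.filter (fun j : Fin d => (j : ℕ) < s), x j) - 1
        else x i) :
    (Convex ℝ (convexHull ℝ (Ψ '' (F : Set (Fin d → ℝ))) + orthant d) ∧
     Ψ '' (convexHull ℝ (F : Set (Fin d → ℝ)) + orthant d) ⊆
       convexHull ℝ (Ψ '' (F : Set (Fin d → ℝ))) + orthant d ∧
     (convexHull ℝ (Ψ '' (F : Set (Fin d → ℝ))) + orthant d) + orthant d =
       convexHull ℝ (Ψ '' (F : Set (Fin d → ℝ))) + orthant d ∧
     (∀ S : Set (Fin d → ℝ), Convex ℝ S →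
        Ψ '' (convexHull ℝ (F : Set (Fin d → ℝ)) + orthant d) ⊆ S →
        S + orthant d = S →
        convexHull ℝ (Ψ '' (F : Set (Fin d → ℝ))) + orthant d ⊆ S)) ∧
    (∀ v ∈ Set.extremePoints ℝ (convexHull ℝ (Ψ '' (F : Set (Fin d → ℝ))) + orthant d),
      ∃ w ∈ Set.extremePoints ℝ (convexHull ℝ (F : Set (Fin d → ℝ)) + orthant d),
        Ψ w = v) :=
  stmt_2_general d s hs1 F Ψ hΨ
end

section
/- Let Δ, Δ' ⊂ ℝ_{≥0}^d each be of the form conv(F) + ℝ_{≥0}^d for finite sets F, F' (possibly empty, with the convention that the polyhedron is then empty). Suppose that for every linear form Λ : ℝ^d → ℝ with strictly positive coefficients one has inf { Λ(x) | x ∈ Δ } = inf { Λ(x) | x ∈ Δ' } (with inf ∅ = +∞). Then Δ = Δ'. -/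
/-!
A point `x ∉ Δ'` can be strictly separated from the closed convex set `Δ'` by a linear form.
Since `Δ'` is stable under adding the orthant and the form is bounded below on it, its
coefficients are nonnegative; adding a small multiple of the coordinate sum makes them
strictly positive without breaking the separation, because `∑ yᵢ ≥ 0` on `Δ'`. This positive form then has a
lower bound on `Δ'` that fails at `x`, so `Δ'` and `Δ ∋ x` have different lower bounds.
-/

open Pointwise Matrix

section Separation

variable {ι : Type*} [Fintype ι]

theorem exists_dotProduct_lt_forall_lt {K : Set (ι → ℝ)} (hconv : Convex ℝ K)
    (hclosed : IsClosed K) {x : ι → ℝ} (hx : x ∉ K) :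
    ∃ w : ι → ℝ, ∃ u : ℝ, w ⬝ᵥ x < u ∧ ∀ y ∈ K, u < w ⬝ᵥ y := by
  classical
  obtain ⟨f, u, hfx, hfK⟩ := geometric_hahn_banach_point_closed hconv hclosed hx
  have hf : ∀ y, f y = (dotProductEquiv ℝ ι).symm f.toLinearMap ⬝ᵥ y := fun y =>
    congrArg (· y) ((dotProductEquiv ℝ ι).apply_symm_apply f.toLinearMap).symm
  exact ⟨_, u, hf x ▸ hfx, fun y hy => hf y ▸ hfK y hy⟩

theorem nonneg_of_forall_lt_dotProduct {K : Set (ι → ℝ)} (hK : IsUpperSet K)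
    (hne : K.Nonempty) {w : ι → ℝ} {u : ℝ} (hw : ∀ y ∈ K, u < w ⬝ᵥ y) : 0 ≤ w := by
  classical
  obtain ⟨y, hy⟩ := hne
  intro i
  by_contra! hwi
  replace hwi : w i < 0 := hwi
  set t := (w ⬝ᵥ y - u) / -w i with ht_def
  have ht : 0 ≤ t := div_nonneg (sub_nonneg.2 (hw y hy).le) (neg_nonneg.2 hwi.le)
  have hmem : y + Pi.single i t ∈ K :=
    hK (le_add_of_nonneg_right (Pi.single_nonneg.2 ht)) hy
  have hval : w ⬝ᵥ (y + Pi.single i t) = u := by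
    rw [dotProduct_add, dotProduct_single, ht_def]
    field_simp [hwi.ne]
    ring
  exact (hw _ hmem).ne' hval

theorem exists_pos_dotProduct_lt_forall_le {K : Set (ι → ℝ)} (hK : K ⊆ Set.Ici 0)
    {w x : ι → ℝ} {u : ℝ} (hw : 0 ≤ w) (hx : w ⬝ᵥ x < u) (hwK : ∀ y ∈ K, u ≤ w ⬝ᵥ y) :
    ∃ lam : ι → ℝ, (∀ i, 0 < lam i) ∧ lam ⬝ᵥ x < u ∧ ∀ y ∈ K, u ≤ lam ⬝ᵥ y := by
  obtain ⟨ε, hε, hεx⟩ := exists_pos_mul_lt (sub_pos.2 hx) (1 ⬝ᵥ x)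
  have hval : ∀ y, (w + ε • 1) ⬝ᵥ y = w ⬝ᵥ y + ε * (1 ⬝ᵥ y) := fun y => by
    rw [add_dotProduct, smul_dotProduct, smul_eq_mul]
  refine ⟨w + ε • 1, fun i => ?_, ?_, fun y hy => ?_⟩
  · simpa using add_pos_of_nonneg_of_pos (hw i) hε
  · rw [hval]; linarith
  · have : 0 ≤ 1 ⬝ᵥ y := dotProduct_nonneg_of_nonneg zero_le_one (hK hy)
    rw [hval]; nlinarith [hwK y hy]


theorem subset_of_forall_le_dotProduct {K K' : Set (ι → ℝ)} (hconv : Convex ℝ K')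
    (hclosed : IsClosed K') (hup : IsUpperSet K') (hnonneg : K' ⊆ Set.Ici 0)
    (h : ∀ lam : ι → ℝ, (∀ i, 0 < lam i) → ∀ c : ℝ,
      (∀ y ∈ K', c ≤ lam ⬝ᵥ y) → ∀ y ∈ K, c ≤ lam ⬝ᵥ y) :
    K ⊆ K' := by
  intro x hx
  by_contra hx'
  rcases K'.eq_empty_or_nonempty with rfl | hne
  · have := h 1 (fun _ => one_pos) (1 ⬝ᵥ x + 1) (by simp) x hx
    linarith
  obtain ⟨w, u, hwx, hwK⟩ := exists_dotProduct_lt_forall_lt hconv hclosed hx'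
  obtain ⟨lam, hlam, hlamx, hlamK⟩ := exists_pos_dotProduct_lt_forall_le hnonneg
    (nonneg_of_forall_lt_dotProduct hup hne hwK) hwx fun y hy => (hwK y hy).le
  exact (h lam hlam u hlamK x hx).not_gt hlamx

end Separation

section Polyhedron

variable {ι : Type*} {s : Set (ι → ℝ)}

theorem convex_convexHull_add_Ici : Convex ℝ (convexHull ℝ s + Set.Ici 0) :=
  (convex_convexHull ℝ s).add (convex_Ici 0)

theorem Set.Finite.isClosed_convexHull_add_Ici [Finite ι] (hs : s.Finite) :
    IsClosed (convexHull ℝ s + Set.Ici 0) :=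
  isClosed_Ici.add_left_of_isCompact (hs.isCompact_convexHull ℝ)

theorem isUpperSet_convexHull_add_Ici : IsUpperSet (convexHull ℝ s + Set.Ici 0) :=
  (isUpperSet_Ici 0).add_left

theorem convexHull_add_Ici_subset_Ici (hs : s ⊆ Set.Ici 0) :
    convexHull ℝ s + Set.Ici 0 ⊆ Set.Ici 0 := by
  rintro _ ⟨a, ha, b, hb, rfl⟩
  exact add_nonneg (convexHull_min hs (convex_Ici 0) ha) (Set.mem_Ici.1 hb)

end Polyhedron

/-- Two Newton-type polyhedra `Δ = conv(F) + ℝ_{≥0}^d` and `Δ' = conv(F') + ℝ_{≥0}^d`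
(possibly empty) whose infima `δ_Λ` agree for every linear form `Λ` with strictly positive
coefficients (equality of infima, including the value `+∞` for the empty polyhedron,
being expressed as equality of the sets of lower bounds) are equal. -/
theorem stmt_19 (d : ℕ) (F F' : Finset (Fin d → ℝ))
    (hFpos : ∀ x ∈ F, ∀ i, 0 ≤ x i) (hF'pos : ∀ x ∈ F', ∀ i, 0 ≤ x i)
    (h : ∀ lam : Fin d → ℝ, (∀ i, 0 < lam i) → ∀ cl : ℝ,
      (∀ x ∈ convexHull ℝ (F : Set (Fin d → ℝ)) + {x : Fin d → ℝ | ∀ i, 0 ≤ x i},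
          cl ≤ ∑ i, lam i * x i) ↔
      (∀ x ∈ convexHull ℝ (F' : Set (Fin d → ℝ)) + {x : Fin d → ℝ | ∀ i, 0 ≤ x i},
          cl ≤ ∑ i, lam i * x i)) :
    convexHull ℝ (F : Set (Fin d → ℝ)) + {x : Fin d → ℝ | ∀ i, 0 ≤ x i} =
      convexHull ℝ (F' : Set (Fin d → ℝ)) + {x : Fin d → ℝ | ∀ i, 0 ≤ x i} := by
  refine subset_antisymm ?_ ?_
  · exact subset_of_forall_le_dotProduct convex_convexHull_add_Ici
      F'.finite_toSet.isClosed_convexHull_add_Ici isUpperSet_convexHull_add_Ici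
      (convexHull_add_Ici_subset_Ici hF'pos) fun lam hlam c => (h lam hlam c).2
  · exact subset_of_forall_le_dotProduct convex_convexHull_add_Ici
      F.finite_toSet.isClosed_convexHull_add_Ici isUpperSet_convexHull_add_Ici
      (convexHull_add_Ici_subset_Ici hFpos) fun lam hlam c => (h lam hlam c).1
end
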